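/- arXiv:1902.08372 — 3 statements merged into one kernel-verified Lean document; each statement's English description precedes it below -/
import Mathlib

section
/- Let μ be a compact-finite deficient topological measure on a locally compact Hausdorff space X and g ∈ C₀⁺(X). Then there exists a compact-finite deficient topological measure μ_g on X such that μ_g(K) = ∫₀^∞ μ(K ∩ g⁻¹([t,∞))) dt for every compact set K, μ_g(V) = ∫₀^∞ μ(V ∩ g⁻¹((t,∞))) dt for every open set V with μ(V) < ∞, and μ_g(K) ≤ ‖g‖_∞ · μ(K) for every compact set K. -/
/-!
On compact sets the layer-cake functional `K ↦ ∫₀^∞ μ(K ∩ {g ≥ t}) dt` is additive on disjoint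
sets because `μ` is; `ν` is obtained from it by inner regularisation on open sets followed by outer
regularisation. What remains is to show that this does not change the values on compact sets, nor
the open layer-cake integral on open sets of finite measure. Both come from a finite grid of levels
`iδ ≤ sup g`: a single open set (resp. a single compact set) approximates all the level sets
`{g ≥ iδ}` (resp. `{g > iδ}`) within `δ` at once, and moving each level to the grid costs a shift
of the integrand by `δ`, which changes the integral by at most `δ · μ(K)`.
-/

open MeasureTheory Set Filter Topology ENNReal

/-- A deficient topological measure on a topological space `X`: a set function with values in
`[0,∞]` (recorded on all sets, but constrained only on open and closed sets) that is finitely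
additive on disjoint compact sets, inner regular on open sets with respect to compact sets,
and outer regular on closed sets with respect to open sets. -/
structure DeficientTopologicalMeasure (X : Type*) [TopologicalSpace X] where
  m : Set X → ℝ≥0∞
  additive : ∀ ⦃C K : Set X⦄, IsCompact C → IsCompact K → Disjoint C K →
    m (C ∪ K) = m C + m K
  innerRegular : ∀ ⦃U : Set X⦄, IsOpen U →
    m U = ⨆ (K : Set X) (_ : IsCompact K) (_ : K ⊆ U), m K
  outerRegular : ∀ ⦃F : Set X⦄, IsClosed F →
    m F = ⨅ (U : Set X) (_ : IsOpen U) (_ : F ⊆ U), m U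

theorem ENNReal.le_of_forall_pos_le_add_ofReal_mul {a b c : ℝ≥0∞} (hc : c ≠ ∞)
    (h : ∀ δ : ℝ, 0 < δ → a ≤ b + ENNReal.ofReal δ * c) : a ≤ b := by
  have hlim : Tendsto (fun δ : ℝ => b + ENNReal.ofReal δ * c) (𝓝[>] 0)
      (𝓝 (b + ENNReal.ofReal 0 * c)) :=
    tendsto_const_nhds.add <| ENNReal.Tendsto.mul_const
      ((ENNReal.continuous_ofReal.tendsto 0).mono_left nhdsWithin_le_nhds) (Or.inr hc)
  simpa using ge_of_tendsto hlim (eventually_nhdsWithin_of_forall h)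

theorem exists_nat_mul_le_lt_add {δ t M : ℝ} (hδ : 0 < δ) (ht : 0 ≤ t) (htM : t ≤ M) :
    ∃ i ∈ Finset.range (⌊M / δ⌋₊ + 1), (i : ℝ) * δ ≤ t ∧ t < i * δ + δ := by
  refine ⟨⌊t / δ⌋₊, Finset.mem_range_succ_iff.mpr (Nat.floor_le_floor ?_), ?_, ?_⟩
  · exact div_le_div_of_nonneg_right htM hδ.le
  · exact (le_div_iff₀ hδ).mp (Nat.floor_le (div_nonneg ht hδ.le))
  · have := Nat.lt_floor_add_one (t / δ)
    rw [div_lt_iff₀ hδ] at this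
    linarith

theorem setLIntegral_Ioi_le_comp_add (f : ℝ → ℝ≥0∞) (a : ℝ) {δ : ℝ} (hδ : 0 ≤ δ) {B : ℝ≥0∞}
    (hB : ∀ t, f t ≤ B) :
    ∫⁻ t in Ioi a, f t ≤ (∫⁻ t in Ioi a, f (t + δ)) + ENNReal.ofReal δ * B := by
  have hshift : ∫⁻ t in Ioi a, f (t + δ) = ∫⁻ t in Ioi (a + δ), f t := by
    simpa using (measurePreserving_add_right volume δ).setLIntegral_comp_preimage_emb
      (measurableEmbedding_addRight δ) f (Ioi (a + δ))
  calc ∫⁻ t in Ioi a, f t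
      = (∫⁻ t in Ioc a (a + δ), f t) + ∫⁻ t in Ioi (a + δ), f t := by
        rw [← Ioc_union_Ioi_eq_Ioi (le_add_of_nonneg_right hδ),
          lintegral_union measurableSet_Ioi (Ioc_disjoint_Ioi le_rfl)]
    _ ≤ (∫⁻ _ in Ioc a (a + δ), B) + ∫⁻ t in Ioi (a + δ), f t := by
        gcongr with t; exact hB t
    _ = (∫⁻ t in Ioi a, f (t + δ)) + ENNReal.ofReal δ * B := by
        rw [hshift, setLIntegral_const, Real.volume_Ioc, add_sub_cancel_left, add_comm, mul_comm]

theorem setLIntegral_Ioi_eq_Ioc_of_eq_zero {F : ℝ → ℝ≥0∞} (a : ℝ) {M : ℝ}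
    (hF : ∀ t, M < t → F t = 0) : ∫⁻ t in Ioi a, F t = ∫⁻ t in Ioc a M, F t := by
  have hsupp : (Iic M).indicator F = F :=
    indicator_eq_self.mpr fun t ht => not_lt.mp fun htM => ht (hF t htM)
  rw [← Iic_inter_Ioi, ← Measure.restrict_restrict measurableSet_Iic,
    ← lintegral_indicator measurableSet_Iic, hsupp]

theorem setLIntegral_Ioi_zero_le_of_le_comp_sub {F f : ℝ → ℝ≥0∞} {B : ℝ≥0∞} {δ M : ℝ}
    (hδ : 0 ≤ δ) (hB : ∀ t, f t ≤ B)
    (hF : ∀ t, 0 < t → t ≤ M → F t ≤ f (t - δ) + ENNReal.ofReal δ)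
    (hF_zero : ∀ t, M < t → F t = 0) :
    ∫⁻ t in Ioi 0, F t ≤ (∫⁻ t in Ioi 0, f t) + ENNReal.ofReal δ * (B + ENNReal.ofReal M) := by
  calc ∫⁻ t in Ioi 0, F t
      = ∫⁻ t in Ioc 0 M, F t := setLIntegral_Ioi_eq_Ioc_of_eq_zero 0 hF_zero
    _ ≤ ∫⁻ t in Ioc 0 M, f (t - δ) + ENNReal.ofReal δ :=
        setLIntegral_mono' measurableSet_Ioc fun t ht => hF t ht.1 ht.2
    _ ≤ (∫⁻ t in Ioi 0, f (t - δ)) + ENNReal.ofReal δ * ENNReal.ofReal M := by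
        rw [lintegral_add_right _ measurable_const, setLIntegral_const, Real.volume_Ioc, sub_zero]
        gcongr
        exact Ioc_subset_Ioi_self
    _ ≤ (∫⁻ t in Ioi 0, f t) + ENNReal.ofReal δ * B + ENNReal.ofReal δ * ENNReal.ofReal M := by
        gcongr
        simpa using setLIntegral_Ioi_le_comp_add (fun t => f (t - δ)) 0 hδ fun t => hB _
    _ = (∫⁻ t in Ioi 0, f t) + ENNReal.ofReal δ * (B + ENNReal.ofReal M) := by
        rw [mul_add, add_assoc]

theorem IsCompact.inter_preimage_Ici {X : Type*} [TopologicalSpace X] {K : Set X}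
    (hK : IsCompact K) {g : X → ℝ} (hg : Continuous g) (t : ℝ) : IsCompact (K ∩ g ⁻¹' Ici t) :=
  hK.inter_right (isClosed_Ici.preimage hg)

theorem inter_preimage_Ici_eq_empty {X : Type*} {K : Set X} {g : X → ℝ} {M t : ℝ}
    (hgM : ∀ x, g x ≤ M) (ht : M < t) : K ∩ g ⁻¹' Ici t = ∅ :=
  eq_empty_of_forall_notMem fun x hx => (hgM x).not_gt (ht.trans_le hx.2)

theorem inter_preimage_Ioi_eq_empty {X : Type*} {K : Set X} {g : X → ℝ} {M t : ℝ}
    (hgM : ∀ x, g x ≤ M) (ht : M ≤ t) : K ∩ g ⁻¹' Ioi t = ∅ :=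
  eq_empty_of_forall_notMem fun x hx => (hgM x).not_gt (ht.trans_lt hx.2)

namespace DeficientTopologicalMeasure

variable {X : Type*} [TopologicalSpace X] (μ : DeficientTopologicalMeasure X)

theorem m_mono_compact_open {C U : Set X} (hC : IsCompact C) (hU : IsOpen U) (hCU : C ⊆ U) :
    μ.m C ≤ μ.m U := by
  rw [μ.innerRegular hU]
  exact le_iSup₂_of_le C hC (le_iSup_of_le hCU le_rfl)

theorem m_mono_open {U V : Set X} (hU : IsOpen U) (hV : IsOpen V) (hUV : U ⊆ V) :
    μ.m U ≤ μ.m V := by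
  rw [μ.innerRegular hU]
  exact iSup₂_le fun K hK => iSup_le fun hKU => μ.m_mono_compact_open hK hV (hKU.trans hUV)

theorem m_mono_compact [T2Space X] {C K : Set X} (hC : IsCompact C) (hK : IsCompact K)
    (hCK : C ⊆ K) : μ.m C ≤ μ.m K := by
  rw [μ.outerRegular hK.isClosed]
  exact le_iInf₂ fun U hU => le_iInf fun hKU => μ.m_mono_compact_open hC hU (hCK.trans hKU)

theorem m_empty (h : μ.m ∅ ≠ ∞) : μ.m ∅ = 0 := by
  have hadd := μ.additive isCompact_empty isCompact_empty disjoint_bot_left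
  rw [union_self] at hadd
  simpa using (ENNReal.add_right_inj h).mp (hadd.symm.trans (add_zero _).symm)

theorem exists_isOpen_m_le_add [T2Space X] {K : Set X} (hK : IsCompact K) (hfin : μ.m K ≠ ∞)
    {ε : ℝ≥0∞} (hε : ε ≠ 0) : ∃ W, IsOpen W ∧ K ⊆ W ∧ μ.m W ≤ μ.m K + ε := by
  have hlt : μ.m K < μ.m K + ε := ENNReal.lt_add_right hfin hε
  conv_lhs at hlt => rw [μ.outerRegular hK.isClosed]
  simp only [iInf_lt_iff] at hlt
  obtain ⟨W, hW, hKW, hlt⟩ := hlt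
  exact ⟨W, hW, hKW, hlt.le⟩

theorem exists_isCompact_m_le_add {U : Set X} (hU : IsOpen U) (hfin : μ.m U ≠ ∞)
    {ε : ℝ≥0∞} (hε : ε ≠ 0) : ∃ C, IsCompact C ∧ C ⊆ U ∧ μ.m U ≤ μ.m C + ε := by
  rcases le_or_gt (μ.m U) ε with hUε | hεU
  · exact ⟨∅, isCompact_empty, empty_subset _, hUε.trans le_add_self⟩
  have hlt : μ.m U - ε < μ.m U := ENNReal.sub_lt_self hfin (hεU.trans_le' zero_le).ne' hε
  conv_rhs at hlt => rw [μ.innerRegular hU]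
  simp only [lt_iSup_iff] at hlt
  obtain ⟨C, hC, hCU, hlt⟩ := hlt
  exact ⟨C, hC, hCU, tsub_le_iff_right.mp hlt.le⟩

variable (g : X → ℝ)

noncomputable def layerIntegral (K : Set X) : ℝ≥0∞ :=
  ∫⁻ t in Ioi (0 : ℝ), μ.m (K ∩ g ⁻¹' Ici t)

noncomputable def innerLayerIntegral (U : Set X) : ℝ≥0∞ :=
  ⨆ (K : Set X) (_ : IsCompact K) (_ : K ⊆ U), μ.layerIntegral g K

noncomputable def outerLayerIntegral (E : Set X) : ℝ≥0∞ :=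
  ⨅ (U : Set X) (_ : IsOpen U) (_ : E ⊆ U), μ.innerLayerIntegral g U

variable {μ g}

theorem layerIntegral_le_innerLayerIntegral {K U : Set X} (hK : IsCompact K) (hKU : K ⊆ U) :
    μ.layerIntegral g K ≤ μ.innerLayerIntegral g U :=
  le_iSup₂_of_le K hK (le_iSup_of_le hKU le_rfl)

theorem innerLayerIntegral_mono {U V : Set X} (hUV : U ⊆ V) :
    μ.innerLayerIntegral g U ≤ μ.innerLayerIntegral g V :=
  iSup₂_le fun _ hK => iSup_le fun hKU => layerIntegral_le_innerLayerIntegral hK (hKU.trans hUV)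

theorem outerLayerIntegral_of_isOpen {U : Set X} (hU : IsOpen U) :
    μ.outerLayerIntegral g U = μ.innerLayerIntegral g U :=
  le_antisymm (iInf₂_le_of_le U hU (iInf_le_of_le subset_rfl le_rfl))
    (le_iInf₂ fun _ _ => le_iInf fun hUV => innerLayerIntegral_mono hUV)

variable [T2Space X]

theorem antitone_m_inter_preimage_Ici (hg : Continuous g) {K : Set X} (hK : IsCompact K) :
    Antitone fun t => μ.m (K ∩ g ⁻¹' Ici t) := fun _ _ hst =>
  μ.m_mono_compact (hK.inter_preimage_Ici hg _) (hK.inter_preimage_Ici hg _) (by gcongr)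

theorem layerIntegral_union (hg : Continuous g) {C K : Set X} (hC : IsCompact C)
    (hK : IsCompact K) (hCK : Disjoint C K) :
    μ.layerIntegral g (C ∪ K) = μ.layerIntegral g C + μ.layerIntegral g K := by
  rw [layerIntegral, layerIntegral, layerIntegral,
    ← lintegral_add_left (antitone_m_inter_preimage_Ici hg hC).measurable]
  refine lintegral_congr fun t => ?_
  rw [union_inter_distrib_right]
  exact μ.additive (hC.inter_preimage_Ici hg t) (hK.inter_preimage_Ici hg t)
    (hCK.mono inter_subset_left inter_subset_left)

theorem layerIntegral_le_mul (hg : Continuous g) (h0 : μ.m ∅ = 0) {M : ℝ}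
    (hgM : ∀ x, g x ≤ M) {K : Set X} (hK : IsCompact K) :
    μ.layerIntegral g K ≤ ENNReal.ofReal M * μ.m K := by
  have hzero : ∀ t, M < t → μ.m (K ∩ g ⁻¹' Ici t) = 0 := fun t ht => by
    rw [inter_preimage_Ici_eq_empty hgM ht, h0]
  calc μ.layerIntegral g K = ∫⁻ t in Ioc 0 M, μ.m (K ∩ g ⁻¹' Ici t) :=
        setLIntegral_Ioi_eq_Ioc_of_eq_zero 0 hzero
    _ ≤ ∫⁻ _ in Ioc 0 M, μ.m K :=
        lintegral_mono fun t => μ.m_mono_compact (hK.inter_preimage_Ici hg t) hK inter_subset_left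
    _ = ENNReal.ofReal M * μ.m K := by rw [setLIntegral_const, Real.volume_Ioc, sub_zero, mul_comm]

theorem layerIntegral_le_of_subset_isOpen (hg : Continuous g) {K V : Set X} (hK : IsCompact K)
    (hKfin : μ.m K ≠ ∞) (hV : IsOpen V) (hKV : K ⊆ V) :
    μ.layerIntegral g K ≤ ∫⁻ t in Ioi 0, μ.m (V ∩ g ⁻¹' Ioi t) := by
  refine ENNReal.le_of_forall_pos_le_add_ofReal_mul hKfin fun ε hε => ?_
  calc μ.layerIntegral g K
      ≤ (∫⁻ t in Ioi 0, μ.m (K ∩ g ⁻¹' Ici (t + ε))) + ENNReal.ofReal ε * μ.m K :=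
        setLIntegral_Ioi_le_comp_add _ 0 hε.le fun t =>
          μ.m_mono_compact (hK.inter_preimage_Ici hg t) hK inter_subset_left
    _ ≤ (∫⁻ t in Ioi 0, μ.m (V ∩ g ⁻¹' Ioi t)) + ENNReal.ofReal ε * μ.m K := by
        gcongr with t
        refine μ.m_mono_compact_open (hK.inter_preimage_Ici hg _)
          (hV.inter (isOpen_Ioi.preimage hg)) (inter_subset_inter hKV fun x hx => ?_)
        exact lt_of_lt_of_le (lt_add_of_pos_right t hε) hx

theorem exists_isOpen_layerIntegral_le (hcf : ∀ K : Set X, IsCompact K → μ.m K < ∞)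
    (hg : Continuous g) {M : ℝ} (hgM : ∀ x, g x ≤ M) {K : Set X} (hK : IsCompact K) {δ : ℝ}
    (hδ : 0 < δ) :
    ∃ U, IsOpen U ∧ K ⊆ U ∧ ∀ C, IsCompact C → C ⊆ U →
      μ.layerIntegral g C ≤
        μ.layerIntegral g K + ENNReal.ofReal δ * (μ.m K + ENNReal.ofReal M) := by
  have hW (i : ℕ) : ∃ W, IsOpen W ∧ K ∩ g ⁻¹' Ici (i * δ) ⊆ W ∧
      μ.m W ≤ μ.m (K ∩ g ⁻¹' Ici (i * δ)) + ENNReal.ofReal δ :=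
    μ.exists_isOpen_m_le_add (hK.inter_preimage_Ici hg _) (hcf _ (hK.inter_preimage_Ici hg _)).ne
      (ENNReal.ofReal_pos.mpr hδ).ne'
  choose W hWo hKW hWle using hW
  -- inside `U`, every grid level set `{g ≥ iδ}` lies in `W i`
  refine ⟨⋂ i ∈ Finset.range (⌊M / δ⌋₊ + 1), W i ∪ g ⁻¹' Iio (i * δ),
    isOpen_biInter_finset fun i _ => (hWo i).union (isOpen_Iio.preimage hg),
    fun x hx => mem_iInter₂.mpr fun i _ => (le_or_gt (i * δ) (g x)).imp (hKW i ⟨hx, ·⟩) id,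
    fun C hC hCU => ?_⟩
  refine setLIntegral_Ioi_zero_le_of_le_comp_sub hδ.le
    (fun t => μ.m_mono_compact (hK.inter_preimage_Ici hg t) hK inter_subset_left) ?_
    fun t ht => by rw [inter_preimage_Ici_eq_empty hgM ht, μ.m_empty (hcf ∅ isCompact_empty).ne]
  intro t ht htM
  obtain ⟨i, hi, hit, hti⟩ := exists_nat_mul_le_lt_add hδ ht.le htM
  have hCW : C ∩ g ⁻¹' Ici t ⊆ W i := fun x hx =>
    (mem_iInter₂.mp (hCU hx.1) i hi).resolve_right (hit.trans hx.2).not_gt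
  calc μ.m (C ∩ g ⁻¹' Ici t) ≤ μ.m (W i) :=
        μ.m_mono_compact_open (hC.inter_preimage_Ici hg t) (hWo i) hCW
    _ ≤ μ.m (K ∩ g ⁻¹' Ici (i * δ)) + ENNReal.ofReal δ := hWle i
    _ ≤ μ.m (K ∩ g ⁻¹' Ici (t - δ)) + ENNReal.ofReal δ := by
        gcongr 1
        exact antitone_m_inter_preimage_Ici hg hK (by linarith)

theorem exists_isCompact_le_layerIntegral (hcf : ∀ K : Set X, IsCompact K → μ.m K < ∞)
    (hg : Continuous g) {M : ℝ} (hgM : ∀ x, g x ≤ M) {V : Set X} (hV : IsOpen V)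
    (hVfin : μ.m V ≠ ∞) {δ : ℝ} (hδ : 0 < δ) :
    ∃ K, IsCompact K ∧ K ⊆ V ∧ ∫⁻ t in Ioi 0, μ.m (V ∩ g ⁻¹' Ioi t) ≤
      μ.layerIntegral g K + ENNReal.ofReal δ * (μ.m V + ENNReal.ofReal M) := by
  have hVt (t : ℝ) : IsOpen (V ∩ g ⁻¹' Ioi t) := hV.inter (isOpen_Ioi.preimage hg)
  have hC (i : ℕ) : ∃ C, IsCompact C ∧ C ⊆ V ∩ g ⁻¹' Ioi (i * δ) ∧
      μ.m (V ∩ g ⁻¹' Ioi (i * δ)) ≤ μ.m C + ENNReal.ofReal δ :=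
    μ.exists_isCompact_m_le_add (hVt _)
      (ne_top_of_le_ne_top hVfin (μ.m_mono_open (hVt _) hV inter_subset_left))
      (ENNReal.ofReal_pos.mpr hδ).ne'
  choose C hCc hCV hCle using hC
  set K := ⋃ i ∈ Finset.range (⌊M / δ⌋₊ + 1), C i
  have hK : IsCompact K := (Finset.range _).isCompact_biUnion fun i _ => hCc i
  have hKV : K ⊆ V := iUnion₂_subset fun i _ => (hCV i).trans inter_subset_left
  refine ⟨K, hK, hKV, ?_⟩
  have hpt (t : ℝ) (ht : 0 < t) (htM : t ≤ M) :
      μ.m (V ∩ g ⁻¹' Ioi t) ≤ μ.m (K ∩ g ⁻¹' Ici (t - δ)) + ENNReal.ofReal δ := by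
    obtain ⟨i, hi, hit, hti⟩ := exists_nat_mul_le_lt_add hδ ht.le htM
    have hCK : C i ⊆ K ∩ g ⁻¹' Ici (t - δ) := fun x hx => by
      have hgx : (i : ℝ) * δ < g x := (hCV i hx).2
      exact ⟨mem_biUnion hi hx, show t - δ ≤ g x by linarith⟩
    calc μ.m (V ∩ g ⁻¹' Ioi t) ≤ μ.m (V ∩ g ⁻¹' Ioi (i * δ)) :=
          μ.m_mono_open (hVt t) (hVt _) (by gcongr)
      _ ≤ μ.m (C i) + ENNReal.ofReal δ := hCle i
      _ ≤ μ.m (K ∩ g ⁻¹' Ici (t - δ)) + ENNReal.ofReal δ := by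
          gcongr 1
          exact μ.m_mono_compact (hCc i) (hK.inter_preimage_Ici hg _) hCK
  calc ∫⁻ t in Ioi 0, μ.m (V ∩ g ⁻¹' Ioi t)
      ≤ μ.layerIntegral g K + ENNReal.ofReal δ * (μ.m K + ENNReal.ofReal M) :=
        setLIntegral_Ioi_zero_le_of_le_comp_sub hδ.le
          (fun t => μ.m_mono_compact (hK.inter_preimage_Ici hg t) hK inter_subset_left) hpt
          fun t ht => by
            rw [inter_preimage_Ioi_eq_empty hgM ht.le, μ.m_empty (hcf ∅ isCompact_empty).ne]
    _ ≤ μ.layerIntegral g K + ENNReal.ofReal δ * (μ.m V + ENNReal.ofReal M) := by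
        gcongr
        exact μ.m_mono_compact_open hK hV hKV

theorem outerLayerIntegral_of_isCompact (hcf : ∀ K : Set X, IsCompact K → μ.m K < ∞)
    (hg : Continuous g) {M : ℝ} (hgM : ∀ x, g x ≤ M) {K : Set X} (hK : IsCompact K) :
    μ.outerLayerIntegral g K = μ.layerIntegral g K := by
  refine le_antisymm ?_
    (le_iInf₂ fun U _ => le_iInf fun hKU => layerIntegral_le_innerLayerIntegral hK hKU)
  refine ENNReal.le_of_forall_pos_le_add_ofReal_mul
    (c := μ.m K + ENNReal.ofReal M)
    (ENNReal.add_ne_top.mpr ⟨(hcf K hK).ne, ENNReal.ofReal_ne_top⟩) fun δ hδ => ?_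
  obtain ⟨U, hU, hKU, hbound⟩ := exists_isOpen_layerIntegral_le hcf hg hgM hK hδ
  exact iInf₂_le_of_le U hU <| iInf_le_of_le hKU <|
    iSup₂_le fun C hC => iSup_le fun hCU => hbound C hC hCU

theorem innerLayerIntegral_of_isOpen (hcf : ∀ K : Set X, IsCompact K → μ.m K < ∞)
    (hg : Continuous g) {M : ℝ} (hgM : ∀ x, g x ≤ M) {V : Set X} (hV : IsOpen V)
    (hVfin : μ.m V ≠ ∞) :
    μ.innerLayerIntegral g V = ∫⁻ t in Ioi 0, μ.m (V ∩ g ⁻¹' Ioi t) := by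
  refine le_antisymm (iSup₂_le fun K hK => iSup_le fun hKV =>
    layerIntegral_le_of_subset_isOpen hg hK (hcf K hK).ne hV hKV) ?_
  refine ENNReal.le_of_forall_pos_le_add_ofReal_mul
    (c := μ.m V + ENNReal.ofReal M)
    (ENNReal.add_ne_top.mpr ⟨hVfin, ENNReal.ofReal_ne_top⟩) fun δ hδ => ?_
  obtain ⟨K, hK, hKV, hbound⟩ := exists_isCompact_le_layerIntegral hcf hg hgM hV hVfin hδ
  exact hbound.trans (by gcongr; exact layerIntegral_le_innerLayerIntegral hK hKV)

variable (μ) in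
noncomputable def withDensity (hcf : ∀ K : Set X, IsCompact K → μ.m K < ∞) (hg : Continuous g)
    {M : ℝ} (hgM : ∀ x, g x ≤ M) : DeficientTopologicalMeasure X where
  m := μ.outerLayerIntegral g
  additive C K hC hK hCK := by
    simp only [outerLayerIntegral_of_isCompact hcf hg hgM, hC, hK, hC.union hK,
      layerIntegral_union hg hC hK hCK]
  innerRegular U hU := by
    rw [outerLayerIntegral_of_isOpen hU]
    exact iSup_congr fun K => iSup_congr fun hK => iSup_congr fun _ =>
      (outerLayerIntegral_of_isCompact hcf hg hgM hK).symm
  outerRegular F _ :=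
    iInf_congr fun U => iInf_congr fun hU => iInf_congr fun _ =>
      (outerLayerIntegral_of_isOpen hU).symm

end DeficientTopologicalMeasure

open DeficientTopologicalMeasure

theorem stmt4_general {X : Type*} [TopologicalSpace X] [T2Space X]
    (μ : DeficientTopologicalMeasure X)
    (hcf : ∀ K : Set X, IsCompact K → μ.m K < ∞)
    (g : X → ℝ) (hg : Continuous g)
    (hginf : Tendsto g (cocompact X) (nhds 0)) :
    ∃ ν : DeficientTopologicalMeasure X,
      (∀ K : Set X, IsCompact K → ν.m K < ∞) ∧
      (∀ K : Set X, IsCompact K →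
        ν.m K = ∫⁻ t in Ioi (0 : ℝ), μ.m (K ∩ g ⁻¹' (Ici t))) ∧
      (∀ V : Set X, IsOpen V → μ.m V < ∞ →
        ν.m V = ∫⁻ t in Ioi (0 : ℝ), μ.m (V ∩ g ⁻¹' (Ioi t))) ∧
      (∀ K : Set X, IsCompact K → ν.m K ≤ ENNReal.ofReal (⨆ x, g x) * μ.m K) := by
  have hbdd : BddAbove (range g) :=
    (ZeroAtInftyContinuousMap.isBounded_range ⟨⟨g, hg⟩, hginf⟩).bddAbove
  have hgM : ∀ x, g x ≤ ⨆ x, g x := le_ciSup hbdd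
  have hν_compact {K : Set X} (hK : IsCompact K) :
      (μ.withDensity hcf hg hgM).m K = μ.layerIntegral g K :=
    outerLayerIntegral_of_isCompact hcf hg hgM hK
  have hν_le {K : Set X} (hK : IsCompact K) :
      (μ.withDensity hcf hg hgM).m K ≤ ENNReal.ofReal (⨆ x, g x) * μ.m K :=
    (hν_compact hK).trans_le
      (layerIntegral_le_mul hg (μ.m_empty (hcf ∅ isCompact_empty).ne) hgM hK)
  refine ⟨μ.withDensity hcf hg hgM, fun K hK => ?_, fun K hK => hν_compact hK,
    fun V hV hVfin => ?_, fun K hK => hν_le hK⟩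
  · exact (hν_le hK).trans_lt (ENNReal.mul_lt_top ENNReal.ofReal_lt_top (hcf K hK))
  · exact (outerLayerIntegral_of_isOpen hV).trans
      (innerLayerIntegral_of_isOpen hcf hg hgM hV hVfin.ne)

/-- Let `μ` be a compact-finite deficient topological measure on a locally
compact Hausdorff space and `g ∈ C₀⁺(X)`. Then there is a compact-finite deficient
topological measure `μ_g` with `μ_g(K) = ∫₀^∞ μ(K ∩ g⁻¹([t,∞))) dt` for compact `K`,
`μ_g(V) = ∫₀^∞ μ(V ∩ g⁻¹((t,∞))) dt` for open `V` with `μ(V) < ∞`, and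
`μ_g(K) ≤ ‖g‖_∞ μ(K)` for compact `K`. -/
theorem stmt4 {X : Type*} [TopologicalSpace X] [LocallyCompactSpace X] [T2Space X]
    (μ : DeficientTopologicalMeasure X)
    (hcf : ∀ K : Set X, IsCompact K → μ.m K < ∞)
    (g : X → ℝ) (hg : Continuous g) (hg0 : ∀ x, 0 ≤ g x)
    (hginf : Tendsto g (cocompact X) (nhds 0)) :
    ∃ ν : DeficientTopologicalMeasure X,
      (∀ K : Set X, IsCompact K → ν.m K < ∞) ∧
      (∀ K : Set X, IsCompact K →
        ν.m K = ∫⁻ t in Ioi (0 : ℝ), μ.m (K ∩ g ⁻¹' (Ici t))) ∧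
      (∀ V : Set X, IsOpen V → μ.m V < ∞ →
        ν.m V = ∫⁻ t in Ioi (0 : ℝ), μ.m (V ∩ g ⁻¹' (Ioi t))) ∧
      (∀ K : Set X, IsCompact K → ν.m K ≤ ENNReal.ofReal (⨆ x, g x) * μ.m K) :=
  stmt4_general μ hcf g hg hginf
end

section
/- Let μ be a deficient topological measure on a locally compact Hausdorff space X, f a bounded continuous function with f(X) ⊆ [a,b], and V an open set with μ(V) < ∞. If inf{ μ(U ∩ V) : U open, Z(f) ⊆ U } = μ(V), where Z(f) = {x ∈ X : f(x) = 0}, then ∫_V f dμ = 0, i.e., aμ(V) + ∫_a^b μ(V ∩ f⁻¹((t,∞))) dt = 0. -/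
/-!
The hypothesis says that `μ V` is carried by `Z(f)`. Hence every open neighbourhood `U` of
`Z(f)` has `μ (U ∩ V) = μ V`, and every open `W ⊆ V` disjoint from `Z(f)` is null: for compact
`K ⊆ W`, `Kᶜ` is an open neighbourhood of `Z(f)`, so `μ V ≤ μ (Kᶜ ∩ V) ≤ μ V - μ K`, and `μ V`
is finite. So `t ↦ μ (V ∩ {f > t})` is `μ V` for `t < 0` and `0` for `t > 0`, and the integral
is `-a μ(V)` (here `a ≤ 0 ≤ b` as `f` vanishes somewhere; if `Z(f) = ∅`, then `μ V = 0`).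
-/

open MeasureTheory Set Filter Topology ENNReal

namespace DeficientTopologicalMeasure

variable {X : Type*} [TopologicalSpace X] (μ : DeficientTopologicalMeasure X)

/-- The paper's `μ_V(Z)`. -/
noncomputable def relOuter (V Z : Set X) : ℝ≥0∞ :=
  ⨅ (U : Set X) (_ : IsOpen U) (_ : Z ⊆ U), μ.m (U ∩ V)

theorem m_le_of_isCompact_subset {K W : Set X} (hK : IsCompact K) (hW : IsOpen W)
    (hKW : K ⊆ W) : μ.m K ≤ μ.m W := by
  rw [μ.innerRegular hW]
  exact le_iSup₂_of_le K hK (le_iSup_of_le hKW le_rfl)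

theorem m_mono_of_isOpen {U W : Set X} (hU : IsOpen U) (hW : IsOpen W) (hUW : U ⊆ W) :
    μ.m U ≤ μ.m W := by
  rw [μ.innerRegular hU]
  exact iSup₂_le fun K hK => iSup_le fun hKU =>
    μ.m_le_of_isCompact_subset hK hW (hKU.trans hUW)

theorem m_add_m_le_of_disjoint {U K W : Set X} (hU : IsOpen U) (hK : IsCompact K)
    (hW : IsOpen W) (hUK : Disjoint U K) (hUW : U ⊆ W) (hKW : K ⊆ W) :
    μ.m U + μ.m K ≤ μ.m W := by
  rw [μ.innerRegular hU, iSup_congr fun L => iSup_and',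
    ENNReal.biSup_add' ⟨∅, isCompact_empty, empty_subset U⟩]
  refine iSup₂_le fun L ⟨hL, hLU⟩ => ?_
  rw [← μ.additive hL hK (hUK.mono_left hLU)]
  exact μ.m_le_of_isCompact_subset (hL.union hK) hW (union_subset (hLU.trans hUW) hKW)

variable {μ} {V Z : Set X}

theorem le_m_inter_of_le_relOuter (h : μ.m V ≤ μ.relOuter V Z) {U : Set X} (hU : IsOpen U)
    (hZU : Z ⊆ U) : μ.m V ≤ μ.m (U ∩ V) :=
  h.trans (iInf₂_le_of_le U hU (iInf_le _ hZU))

theorem m_inter_eq_of_le_relOuter (hV : IsOpen V) (h : μ.m V ≤ μ.relOuter V Z) {U : Set X}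
    (hU : IsOpen U) (hZU : Z ⊆ U) : μ.m (V ∩ U) = μ.m V := by
  rw [inter_comm]
  exact le_antisymm (μ.m_mono_of_isOpen (hU.inter hV) hV inter_subset_right)
    (le_m_inter_of_le_relOuter h hU hZU)

theorem m_eq_zero_of_le_relOuter [T2Space X] (hV : IsOpen V) (hVfin : μ.m V ≠ ∞)
    (h : μ.m V ≤ μ.relOuter V Z) {W : Set X} (hW : IsOpen W) (hWV : W ⊆ V)
    (hWZ : Disjoint W Z) : μ.m W = 0 := by
  rw [μ.innerRegular hW, ← nonpos_iff_eq_zero]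
  refine iSup₂_le fun K hK => iSup_le fun hKW => ?_
  have hVK : μ.m V + μ.m K ≤ μ.m V + 0 :=
    calc μ.m V + μ.m K ≤ μ.m (Kᶜ ∩ V) + μ.m K := by
          gcongr
          exact le_m_inter_of_le_relOuter h hK.isClosed.isOpen_compl
            (hWZ.mono_left hKW).symm.subset_compl_right
      _ ≤ μ.m V := μ.m_add_m_le_of_disjoint (hK.isClosed.isOpen_compl.inter hV) hK hV
          (disjoint_compl_left.mono_left inter_subset_left) inter_subset_right (hKW.trans hWV)
      _ = μ.m V + 0 := (add_zero _).symm
  exact ENNReal.le_of_add_le_add_left hVfin hVK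

end DeficientTopologicalMeasure

theorem intervalIntegral_eq_of_eq_const_of_neg_of_eq_zero_of_pos {g : ℝ → ℝ} {a b c : ℝ}
    (ha : a ≤ 0) (hb : 0 ≤ b) (hneg : ∀ t < 0, g t = c) (hpos : ∀ t, 0 < t → g t = 0) :
    ∫ t in a..b, g t = -a * c := by
  have hleft : EqOn g (fun _ => c) (uIoo a 0) := fun t ht => hneg t (uIoo_of_le ha ▸ ht).2
  have hright : EqOn g (fun _ => 0) (uIoo 0 b) := fun t ht => hpos t (uIoo_of_le hb ▸ ht).1
  rw [← intervalIntegral.integral_add_adjacent_intervals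
      (intervalIntegrable_const.congr_uIoo hleft.symm)
      (intervalIntegrable_const.congr_uIoo hright.symm),
    intervalIntegral.integral_congr_uIoo hleft, intervalIntegral.integral_congr_uIoo hright]
  simp

theorem stmt14_general {X : Type*} [TopologicalSpace X] [T2Space X]
    (μ : DeficientTopologicalMeasure X)
    (f : X → ℝ) (hf : Continuous f) (a b : ℝ) (hfab : ∀ x, f x ∈ Icc a b)
    (V : Set X) (hV : IsOpen V) (hVfin : μ.m V < ∞)
    (hZ : (⨅ (U : Set X) (_ : IsOpen U) (_ : f ⁻¹' {0} ⊆ U), μ.m (U ∩ V)) = μ.m V) :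
    a * (μ.m V).toReal + (∫ t in a..b, (μ.m (V ∩ f ⁻¹' (Ioi t))).toReal) = 0 := by
  have hZV : μ.m V ≤ μ.relOuter V (f ⁻¹' {0}) := hZ.ge
  have hlevel : ∀ t, IsOpen (f ⁻¹' Ioi t) := fun t => isOpen_Ioi.preimage hf
  have hnull : ∀ W, IsOpen W → W ⊆ V → Disjoint W (f ⁻¹' {0}) → μ.m W = 0 := fun W hW hWV =>
    μ.m_eq_zero_of_le_relOuter hV hVfin.ne hZV hW hWV
  rcases (f ⁻¹' {0}).eq_empty_or_nonempty with hempty | ⟨x₀, hx₀⟩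
  · have h0 : ∀ W, IsOpen W → W ⊆ V → μ.m W = 0 := fun W hW hWV =>
      hnull W hW hWV (hempty ▸ disjoint_empty W)
    simp [h0 V hV subset_rfl, fun t => h0 _ (hV.inter (hlevel t)) inter_subset_left]
  have hx₀ : f x₀ = 0 := hx₀
  rw [intervalIntegral_eq_of_eq_const_of_neg_of_eq_zero_of_pos (hx₀ ▸ (hfab x₀).1)
    (hx₀ ▸ (hfab x₀).2) (c := (μ.m V).toReal), neg_mul, add_neg_cancel]
  · intro t ht
    rw [μ.m_inter_eq_of_le_relOuter hV hZV (hlevel t)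
      fun x (hx : f x = 0) => show t < f x by rw [hx]; exact ht]
  · intro t ht
    rw [hnull _ (hV.inter (hlevel t)) inter_subset_left, ENNReal.toReal_zero]
    exact disjoint_left.mpr fun x hx (hx0 : f x = 0) => by
      have : t < f x := hx.2
      linarith

/-- Let `μ` be a deficient topological measure on a locally compact Hausdorff
space, `f` bounded continuous with `f(X) ⊆ [a,b]`, and `V` open with `μ(V) < ∞`. If
`μ_V(Z(f)) = inf{μ(U ∩ V) : U open, Z(f) ⊆ U}` equals `μ(V)`, then `∫_V f dμ = 0`. -/
theorem stmt14 {X : Type*} [TopologicalSpace X] [LocallyCompactSpace X] [T2Space X]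
    (μ : DeficientTopologicalMeasure X)
    (f : X → ℝ) (hf : Continuous f) (a b : ℝ) (hfab : ∀ x, f x ∈ Icc a b)
    (V : Set X) (hV : IsOpen V) (hVfin : μ.m V < ∞)
    (hZ : (⨅ (U : Set X) (_ : IsOpen U) (_ : f ⁻¹' {0} ⊆ U), μ.m (U ∩ V)) = μ.m V) :
    a * (μ.m V).toReal + (∫ t in a..b, (μ.m (V ∩ f ⁻¹' (Ioi t))).toReal) = 0 :=
  stmt14_general μ f hf a b hfab V hV hVfin hZ
end

section
/- Let X be a compact Hausdorff space, μ a deficient topological measure on X with μ(X) < ∞, f a continuous real-valued function on X with f ≤ 0, and V an open set. Then inf{ μ(U ∩ V) : U open, Z(f) ⊆ U } = μ(V) if and only if ∫_V f dμ = 0, where Z(f) = {x ∈ X : f(x) = 0} and ∫_V f dμ := aμ(V) + ∫_a^0 μ(V ∩ f⁻¹((t,∞))) dt for any a ≤ min_{x∈X} f(x). -/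
open MeasureTheory Set Filter Topology ENNReal

/-! The integrand `t ↦ μ(V ∩ {f > t})` is antitone and equals `μ(V)` for `t < a`, so the integral
vanishes iff it equals `μ(V)` for every `t < 0`. By compactness, every open neighbourhood of
`Z(f)` contains some `{f > t}` with `t < 0`, so this is also equivalent to `μ_V(Z(f)) = μ(V)`. -/

theorem Antitone.intervalIntegral_eq_sub_mul_iff {F : ℝ → ℝ} (hF : Antitone F) {a b c : ℝ}
    (hab : a ≤ b) (hc : ∀ t < a, F t = c) :
    ∫ t in a..b, F t = (b - a) * c ↔ ∀ t < b, F t = c := by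
  have hle : ∀ t, F t ≤ c := fun t =>
    (hF (min_le_left t (a - 1))).trans_eq (hc _ ((min_le_right _ _).trans_lt (by linarith)))
  have hint : ∀ s t, IntervalIntegrable F volume s t := fun _ _ => hF.intervalIntegrable
  constructor
  · intro h t htb
    rcases lt_or_ge t a with hta | hat
    · exact hc t hta
    refine le_antisymm (hle t) (not_lt.1 fun hlt => h.not_lt ?_)
    have hleft : ∫ s in a..t, F s ≤ (t - a) * c := by
      simpa using intervalIntegral.integral_mono_on hat (hint _ _)
        intervalIntegrable_const fun s _ => hle s
    have hright : ∫ s in t..b, F s ≤ (b - t) * F t := by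
      simpa using intervalIntegral.integral_mono_on htb.le (hint _ _)
        intervalIntegrable_const fun s hs => hF hs.1
    calc ∫ s in a..b, F s = (∫ s in a..t, F s) + ∫ s in t..b, F s :=
          (intervalIntegral.integral_add_adjacent_intervals (hint _ _) (hint _ _)).symm
      _ < (t - a) * c + (b - t) * c := by
          nlinarith [mul_lt_mul_of_pos_left hlt (sub_pos.2 htb)]
      _ = (b - a) * c := by ring
  · intro h
    rw [intervalIntegral.integral_congr_Ioo_of_le hab fun t ht => h t ht.2]
    simp

lemma exists_lt_zero_preimage_Ioi_subset {X : Type*} [TopologicalSpace X] [CompactSpace X]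
    {f : X → ℝ} (hf : Continuous f) (hf0 : ∀ x, f x ≤ 0) {U : Set X} (hU : IsOpen U)
    (hZU : f ⁻¹' {0} ⊆ U) : ∃ t < 0, f ⁻¹' Ioi t ⊆ U := by
  rcases (Uᶜ).eq_empty_or_nonempty with hUc | hUc
  · exact ⟨-1, by norm_num, by simp [compl_empty_iff.1 hUc]⟩
  obtain ⟨x₀, hx₀, hmax⟩ := hU.isClosed_compl.isCompact.exists_isMaxOn hUc hf.continuousOn
  refine ⟨f x₀, (hf0 x₀).lt_of_ne fun h => hx₀ (hZU h), fun x (hx : f x₀ < f x) => ?_⟩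
  by_contra hxU
  exact (hmax hxU).not_gt hx

namespace DeficientTopologicalMeasure

variable {X : Type*} [TopologicalSpace X] (μ : DeficientTopologicalMeasure X)

lemma m_mono {U W : Set X} (hU : IsOpen U) (hW : IsOpen W) (h : U ⊆ W) : μ.m U ≤ μ.m W := by
  rw [μ.innerRegular hU, μ.innerRegular hW]
  exact iSup₂_le fun K hK => iSup_le fun hKU =>
    le_iSup₂_of_le K hK (le_iSup_of_le (hKU.trans h) le_rfl)

lemma iInf_inter_eq_iff_forall_lt_zero [CompactSpace X] {f : X → ℝ} (hf : Continuous f)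
    (hf0 : ∀ x, f x ≤ 0) {V : Set X} (hV : IsOpen V) :
    (⨅ (U : Set X) (_ : IsOpen U) (_ : f ⁻¹' {0} ⊆ U), μ.m (U ∩ V)) = μ.m V ↔
      ∀ t < 0, μ.m (V ∩ f ⁻¹' Ioi t) = μ.m V := by
  have hopen : ∀ t, IsOpen (V ∩ f ⁻¹' Ioi t) := fun t => hV.inter (isOpen_Ioi.preimage hf)
  constructor
  · intro h t ht
    refine le_antisymm (μ.m_mono (hopen t) hV inter_subset_left) ?_
    rw [← h, inter_comm]
    refine iInf₂_le_of_le _ (isOpen_Ioi.preimage hf) (iInf_le_of_le ?_ le_rfl)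
    intro x hx
    simpa [show f x = 0 from hx] using ht
  · intro h
    refine le_antisymm (iInf₂_le_of_le univ isOpen_univ (iInf_le_of_le (subset_univ _) ?_))
      (le_iInf₂ fun U hU => le_iInf fun hZU => ?_)
    · rw [univ_inter]
    obtain ⟨t, ht, htU⟩ := exists_lt_zero_preimage_Ioi_subset hf hf0 hU hZU
    calc μ.m V = μ.m (V ∩ f ⁻¹' Ioi t) := (h t ht).symm
      _ ≤ μ.m (U ∩ V) := μ.m_mono (hopen t) (hU.inter hV) fun x hx => ⟨htU hx.2, hx.1⟩

end DeficientTopologicalMeasure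

theorem stmt15_general {X : Type*} [TopologicalSpace X] [CompactSpace X]
    (μ : DeficientTopologicalMeasure X) (hμfin : μ.m univ < ∞)
    (f : X → ℝ) (hf : Continuous f) (hf0 : ∀ x, f x ≤ 0)
    (V : Set X) (hV : IsOpen V)
    (a : ℝ) (ha0 : a ≤ 0) (haf : ∀ x, a ≤ f x) :
    (⨅ (U : Set X) (_ : IsOpen U) (_ : f ⁻¹' {0} ⊆ U), μ.m (U ∩ V)) = μ.m V ↔
      a * (μ.m V).toReal + (∫ t in a..(0 : ℝ), (μ.m (V ∩ f ⁻¹' (Ioi t))).toReal) = 0 := by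
  have hopen : ∀ t, IsOpen (V ∩ f ⁻¹' Ioi t) := fun t => hV.inter (isOpen_Ioi.preimage hf)
  have hVfin : μ.m V ≠ ∞ := (μ.m_mono hV isOpen_univ (subset_univ V)).trans_lt hμfin |>.ne
  have hfin : ∀ t, μ.m (V ∩ f ⁻¹' Ioi t) ≠ ∞ := fun t =>
    ne_top_of_le_ne_top hVfin (μ.m_mono (hopen t) hV inter_subset_left)
  have hanti : Antitone fun t => (μ.m (V ∩ f ⁻¹' Ioi t)).toReal := fun s t hst =>
    ENNReal.toReal_mono (hfin s) (μ.m_mono (hopen t) (hopen s)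
      (inter_subset_inter_right _ (preimage_mono (Ioi_subset_Ioi hst))))
  have hbelow : ∀ t < a, (μ.m (V ∩ f ⁻¹' Ioi t)).toReal = (μ.m V).toReal := fun t ht => by
    rw [show f ⁻¹' Ioi t = univ from eq_univ_of_forall fun x => ht.trans_le (haf x), inter_univ]
  rw [μ.iInf_inter_eq_iff_forall_lt_zero hf hf0 hV,
    ← forall₂_congr fun t _ => ENNReal.toReal_eq_toReal_iff' (hfin t) hVfin,
    ← hanti.intervalIntegral_eq_sub_mul_iff ha0 hbelow]
  constructor <;> intro h <;> linarith

/-- Let `X` be compact Hausdorff, `μ` a deficient topological measure with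
`μ(X) < ∞`, `f` continuous with `f ≤ 0`, and `V` open. Then
`μ_V(Z(f)) = μ(V)` if and only if `∫_V f dμ = 0`, where
`μ_V(Z(f)) = inf{μ(U ∩ V) : U open, Z(f) ⊆ U}` and
`∫_V f dμ = aμ(V) + ∫_a^0 μ(V ∩ f⁻¹((t,∞))) dt` for any `a ≤ min f` (the value being
independent of the choice of `a`). -/
theorem stmt15 {X : Type*} [TopologicalSpace X] [CompactSpace X] [T2Space X]
    (μ : DeficientTopologicalMeasure X) (hμfin : μ.m univ < ∞)
    (f : X → ℝ) (hf : Continuous f) (hf0 : ∀ x, f x ≤ 0)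
    (V : Set X) (hV : IsOpen V)
    (a : ℝ) (ha0 : a ≤ 0) (haf : ∀ x, a ≤ f x) :
    (⨅ (U : Set X) (_ : IsOpen U) (_ : f ⁻¹' {0} ⊆ U), μ.m (U ∩ V)) = μ.m V ↔
      a * (μ.m V).toReal + (∫ t in a..(0 : ℝ), (μ.m (V ∩ f ⁻¹' (Ioi t))).toReal) = 0 :=
  stmt15_general μ hμfin f hf hf0 V hV a ha0 haf
end
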